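/- The group 1 + P(-1) acts transitively on the affine subspace ∂ + P(-1) by conjugation: for any Q ∈ ∂ + P(-1) there exists S ∈ 1 + P(-1) with S ∂ S^{-1} = Q. -/

import Mathlib

/-- A pseudodifferential operator over `A`: a formal series `Σ_{i ≤ n} a_i ∂^i`,
encoded by its coefficient function `ℤ → A`, with support bounded above. -/
def PDO (A : Type) [Ring A] : Type := {f : ℤ → A // ∃ n : ℤ, ∀ i > n, f i = 0}

variable {A : Type} [Ring A]

/-- The zero pseudodifferential operator. -/
def pdoZero (A : Type) [Ring A] : PDO A := ⟨fun _ => 0, ⟨0, fun _ _ => rfl⟩⟩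

/-- The identity pseudodifferential operator `1·∂^0`. -/
def pdoOne (A : Type) [Ring A] : PDO A :=
  ⟨fun i => if i = 0 then 1 else 0, ⟨0, fun i hi => if_neg (by omega)⟩⟩

/-- The pseudodifferential operator `∂` itself, i.e. `1·∂^1`. -/
def pdoDel (A : Type) [Ring A] : PDO A :=
  ⟨fun i => if i = 1 then 1 else 0, ⟨1, fun i hi => if_neg (by omega)⟩⟩

/-- A constant-symbol pdo `a·∂^0`. -/
def pdoConst (a : A) : PDO A :=
  ⟨fun i => if i = 0 then a else 0, ⟨0, fun i hi => if_neg (by omega)⟩⟩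

/-- Pointwise addition of pseudodifferential operators. -/
def pdoAdd (P Q : PDO A) : PDO A :=
  ⟨fun i => P.1 i + Q.1 i,
   ⟨max P.2.choose Q.2.choose, fun i hi => by
      dsimp only
      rw [P.2.choose_spec i (lt_of_le_of_lt (le_max_left _ _) hi),
          Q.2.choose_spec i (lt_of_le_of_lt (le_max_right _ _) hi), add_zero]⟩⟩

/-- Pointwise negation. -/
def pdoNeg (P : PDO A) : PDO A :=
  ⟨fun i => -(P.1 i), ⟨P.2.choose, fun i hi => by dsimp only; rw [P.2.choose_spec i hi, neg_zero]⟩⟩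

/-- The generalized Leibniz product of pseudodifferential operators
`(Σ_{i≤n} a_i ∂^i)(Σ_{j≤m} b_j ∂^j) = Σ_{i,j} Σ_{k≥0} binom(i,k) a_i (∂^k b_j) ∂^{i+j-k}`,
where `binom(i,k)` is the generalized binomial coefficient (`Ring.choose` on `ℤ`)
and `d` plays the role of the derivation `∂` of `A`. -/
noncomputable def pdoMul (d : A → A) (P Q : PDO A) : PDO A :=
  ⟨fun N => ∑ i ∈ Finset.Icc (N - Q.2.choose) P.2.choose,
      ∑ j ∈ Finset.Icc (N - i) Q.2.choose,
        (Ring.choose i (i + j - N).toNat : ℤ) • (P.1 i * d^[(i + j - N).toNat] (Q.1 j)),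
   ⟨P.2.choose + Q.2.choose, fun N hN => by
      dsimp only
      rw [Finset.Icc_eq_empty (by omega), Finset.sum_empty]⟩⟩

/-- `P` has order `≤ n` : all coefficients above `n` vanish. -/
def pdoOrderLE (P : PDO A) (n : ℤ) : Prop := ∀ i > n, P.1 i = 0

/-- `P` belongs to `1 + P(-1)`. -/
def pdoInOnePlus {A : Type} [Ring A] (P : PDO A) : Prop :=
  P.1 0 = 1 ∧ ∀ i > (0 : ℤ), P.1 i = 0

/-- `Q` belongs to `∂ + P(-1)`. -/
def pdoInDelPlus {A : Type} [Ring A] (Q : PDO A) : Prop :=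
  Q.1 1 = 1 ∧ Q.1 0 = 0 ∧ ∀ i > (1 : ℤ), Q.1 i = 0

/-!
Write `S = 1 + s₋₁ ∂⁻¹ + s₋₂ ∂⁻² + ⋯`. The `∂^N`-coefficient of `Q S - S ∂` is `∂ s_N` plus
terms involving only the `s_i` with `i > N`, so `S ∂ = Q S` is solved for `s₋₁, s₋₂, …` in turn,
each step taking an antiderivative. In the same way every element of `1 + P(-1)` has a right
inverse, determined coefficient by coefficient. Since the Leibniz product is associative, a right
inverse of a right inverse is the element itself, so right inverses are two-sided, and
`S ∂ S⁻¹ = Q S S⁻¹ = Q`.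
-/

open Finset

theorem iterate_map_sum {M F ι : Type*} [AddCommMonoid M] [FunLike F M M] [AddMonoidHomClass F M M]
    (f : F) (n : ℕ) (s : Finset ι) (g : ι → M) :
    (⇑f)^[n] (∑ i ∈ s, g i) = ∑ i ∈ s, (⇑f)^[n] (g i) := by
  induction n with
  | zero => rfl
  | succ n ih => simp only [Function.iterate_succ_apply', ih, map_sum]

theorem Derivation.iterate_leibniz {R A : Type*} [CommSemiring R] [CommSemiring A] [Algebra R A]
    (D : Derivation R A A) (n : ℕ) (a b : A) :
    D^[n] (a * b) = ∑ i ∈ range (n + 1), n.choose i • (D^[i] a * D^[n - i] b) := by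
  rw [← Nat.sum_antidiagonal_eq_sum_range_succ fun i j => n.choose i • (D^[i] a * D^[j] b)]
  induction n with
  | zero => simp
  | succ n ih =>
    rw [sum_antidiagonal_choose_succ_nsmul (fun i j => D^[i] a * D^[j] b) n]
    simp only [Function.iterate_succ_apply', ih, map_sum, map_nsmul, leibniz, smul_eq_mul,
      smul_add, sum_add_distrib]
    refine congrArg _ (sum_congr rfl fun ⟨i, j⟩ hij => ?_)
    rw [n.choose_symm_of_eq_add (mem_antidiagonal.1 hij).symm, mul_comm]

theorem Int.choose_mul_choose_sub_eq_sum (i j : ℤ) {t p : ℕ} (hp : p ≤ t) :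
    Ring.choose i p * Ring.choose (i + j - p) (t - p)
      = ∑ s ∈ Finset.range (t - p + 1),
          Ring.choose i (t - s) * Ring.choose j s * ((t - s).choose p : ℤ) := by
  have hv := Ring.add_choose_eq (r := j) (s := i - (p : ℤ)) (t - p) (Commute.all _ _)
  rw [Finset.Nat.sum_antidiagonal_eq_sum_range_succ_mk] at hv
  rw [show i + j - (p : ℤ) = j + (i - p) by ring, hv, Finset.mul_sum]
  refine sum_congr rfl fun s hs => ?_
  rw [Finset.mem_range] at hs
  have hc := Ring.choose_smul_choose i (show p ≤ t - s by omega)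
  rw [nsmul_eq_mul, show t - s - p = t - p - s by omega] at hc
  change Ring.choose i p * (Ring.choose j s * Ring.choose (i - (p : ℤ)) (t - p - s)) = _
  linear_combination -(Ring.choose j s) * hc

theorem Ring.choose_one_of_two_le {R : Type*} [NonAssocRing R] [Pow R ℕ] [NatPowAssoc R]
    [BinomialRing R] {k : ℕ} (hk : 2 ≤ k) : Ring.choose (1 : R) k = 0 := by
  rw [← Nat.cast_one, Ring.choose_natCast, Nat.choose_eq_zero_of_lt (by omega), Nat.cast_zero]

/-- The binomial identity that makes the Leibniz product associative. -/
theorem Int.sum_sum_choose_smul_eq {M : Type*} [AddCommGroup M] (i j : ℤ) (t : ℕ) (B : ℕ → M) :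
    ∑ s ∈ Finset.range (t + 1), ∑ p ∈ Finset.range (t - s + 1),
      (Ring.choose i (t - s) * (Ring.choose j s * ((t - s).choose p : ℤ))) • B p
    = ∑ k ∈ Finset.range (t + 1), (Ring.choose (i + j - k) (t - k) * Ring.choose i k) • B k := by
  have extend : ∀ s ∈ Finset.range (t + 1),
      ∑ p ∈ Finset.range (t - s + 1),
        (Ring.choose i (t - s) * (Ring.choose j s * ((t - s).choose p : ℤ))) • B p
      = ∑ p ∈ Finset.range (t + 1),
        (Ring.choose i (t - s) * (Ring.choose j s * ((t - s).choose p : ℤ))) • B p := by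
    intro s _
    refine sum_subset (range_subset_range.mpr (by omega)) fun p hp hp' => ?_
    simp only [Finset.mem_range] at hp hp'
    rw [Nat.choose_eq_zero_of_lt (by omega), Nat.cast_zero, mul_zero, mul_zero, zero_smul]
  rw [sum_congr rfl extend, sum_comm]
  refine sum_congr rfl fun p hp => ?_
  rw [Finset.mem_range] at hp
  rw [← sum_subset (range_subset_range.mpr (show t - p + 1 ≤ t + 1 by omega)) fun s hs hs' => by
      simp only [Finset.mem_range] at hs hs'
      rw [Nat.choose_eq_zero_of_lt (by omega), Nat.cast_zero, mul_zero, mul_zero, zero_smul],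
    ← sum_smul, mul_comm, Int.choose_mul_choose_sub_eq_sum i j (by omega : p ≤ t)]
  simp only [mul_assoc]

def downwardRec {A : Type} [Zero A] [One A] (F : ℤ → (ℤ → A) → A) (N : ℤ) : A :=
  if 0 < N then 0 else if N = 0 then 1 else F N fun i => if N < i then downwardRec F i else 0
termination_by (-N).toNat
decreasing_by omega

theorem exists_pdoInOnePlus_rec {A : Type} [Ring A] (F : ℤ → (ℤ → A) → A)
    (hF : ∀ N g g', (∀ i > N, g i = g' i) → F N g = F N g') :
    ∃ S : PDO A, pdoInOnePlus S ∧ ∀ N < 0, S.1 N = F N S.1 := by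
  refine ⟨⟨downwardRec F, 0, fun N hN => ?_⟩, ⟨?_, fun N hN => ?_⟩, fun N hN => ?_⟩
  · rw [downwardRec, if_pos hN]
  · change downwardRec F 0 = 1
    rw [downwardRec, if_neg (lt_irrefl 0), if_pos rfl]
  · change downwardRec F N = 0
    rw [downwardRec, if_pos hN]
  · change downwardRec F N = F N (downwardRec F)
    rw [downwardRec, if_neg (by omega), if_neg hN.ne]
    exact hF N _ _ fun i hi => if_pos hi

section LeibnizProduct

variable {A : Type} [CommRing A] (D : Derivation ℤ A A)

/-- The `∂^N`-coefficient of `c ∂^i · Σ_{j ≤ b} g_j ∂^j`. -/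
noncomputable def mulRow (d : A → A) (i : ℤ) (c : A) (g : ℤ → A) (b N : ℤ) : A :=
  ∑ j ∈ Icc (N - i) b, (Ring.choose i (i + j - N).toNat : ℤ) • (c * d^[(i + j - N).toNat] (g j))

noncomputable def mulCoeff (d : A → A) (f g : ℤ → A) (a b N : ℤ) : A :=
  ∑ i ∈ Icc (N - b) a, mulRow d i (f i) g b N

theorem pdoMul_coeff_eq_mulCoeff (d : A → A) (P Q : PDO A) (N : ℤ) :
    (pdoMul d P Q).1 N = mulCoeff d P.1 Q.1 P.2.choose Q.2.choose N := rfl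

theorem mulCoeff_eq_zero_of_lt (d : A → A) (f g : ℤ → A) {a b N : ℤ} (h : a + b < N) :
    mulCoeff d f g a b N = 0 :=
  sum_eq_zero fun i hi => by
    rw [mem_Icc] at hi
    rw [mulRow, Icc_eq_empty (by omega), sum_empty]

theorem mulCoeff_eq_mulRow_add (d : A → A) (f g : ℤ → A) (a b N : ℤ) :
    mulCoeff d f g a b N = mulRow d a (f a) g b N + mulCoeff d f g (a - 1) b N := by
  by_cases h : N - b ≤ a
  · rw [mulCoeff, mulCoeff, ← insert_Icc_sub_one_right_eq_Icc h, sum_insert (by simp)]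
  · rw [mulCoeff, mulCoeff, mulRow, Icc_eq_empty h, Icc_eq_empty (by omega),
      Icc_eq_empty (by omega)]
    simp

theorem mulCoeff_congr_right (d : A → A) (f : ℤ → A) {g g' : ℤ → A} {a b N : ℤ}
    (h : ∀ j, N - a ≤ j → g j = g' j) : mulCoeff d f g a b N = mulCoeff d f g' a b N :=
  sum_congr rfl fun i hi => sum_congr rfl fun j hj => by
    rw [mem_Icc] at hi hj
    rw [h j (by omega)]

theorem mulRow_coeff_zero (d : A → A) (i : ℤ) (g : ℤ → A) (b N : ℤ) : mulRow d i 0 g b N = 0 := by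
  simp [mulRow]

theorem mulRow_zero_eq (d : A → A) (c : A) {g : ℤ → A} {b : ℤ} (hg : ∀ j > b, g j = 0) (N : ℤ) :
    mulRow d 0 c g b N = c * g N := by
  by_cases hN : N ≤ b
  · rw [mulRow, sum_eq_single_of_mem N (by simp [hN])]
    · simp
    · intro j hj hjN
      rw [mem_Icc] at hj
      rw [show (0 + j - N).toNat = (j - N).toNat - 1 + 1 by omega, Ring.choose_zero_succ, zero_smul]
  · rw [mulRow, Icc_eq_empty (by omega), sum_empty, hg N (by omega), mul_zero]

noncomputable def mulCoeff₃ (d : A → A) (f g h : ℤ → A) (a b c N : ℤ) : A :=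
  ∑ i ∈ Icc (N - b - c) a, ∑ j ∈ Icc (N - c - i) b, ∑ w ∈ Icc (N - i - j) c,
    ∑ k ∈ range ((i + j + w - N).toNat + 1),
      (Ring.choose (i + j - k) ((i + j + w - N).toNat - k) * Ring.choose i k) •
        (f i * d^[k] (g j) * d^[(i + j + w - N).toNat - k] (h w))

theorem mulCoeff_mulCoeff_left (d : A → A) (f g h : ℤ → A) (a b c N : ℤ) :
    mulCoeff d (mulCoeff d f g a b) h (a + b) c N = mulCoeff₃ d f g h a b c N := by
  simp only [mulCoeff, mulRow, mulCoeff₃, sum_mul, smul_sum, smul_mul_assoc, smul_smul, sum_sigma']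
  refine sum_nbij' (fun p => ⟨p.2.2.1, p.2.2.2, p.2.1, (p.2.2.1 + p.2.2.2 - p.1).toNat⟩)
    (fun p => ⟨p.1 + p.2.1 - (p.2.2.2 : ℤ), p.2.2.1, p.1, p.2.1⟩) ?_ ?_ ?_ ?_ ?_
  · rintro ⟨x, w, i, j⟩ hp
    simp only [mem_sigma, mem_Icc, mem_range] at hp ⊢
    omega
  · rintro ⟨i, j, w, k⟩ hp
    simp only [mem_sigma, mem_Icc, mem_range] at hp ⊢
    omega
  · rintro ⟨x, w, i, j⟩ hp
    simp only [mem_sigma, mem_Icc] at hp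
    simp only [show i + j - ((i + j - x).toNat : ℤ) = x by omega]
  · rintro ⟨i, j, w, k⟩ hp
    simp only [mem_sigma, mem_Icc, mem_range] at hp
    simp only [show (i + j - (i + j - (k : ℤ))).toNat = k by omega]
  · rintro ⟨x, w, i, j⟩ hp
    simp only [mem_sigma, mem_Icc] at hp
    simp only [show ((i + j - x).toNat : ℤ) = i + j - x by omega,
      show (x + w - N).toNat = (i + j + w - N).toNat - (i + j - x).toNat by omega,
      show i + j - (i + j - x) = x by ring]

theorem mulCoeff_eq_of_le {f g : ℤ → A} {a b a' b' : ℤ} (hf : ∀ i > a, f i = 0)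
    (hg : ∀ j > b, g j = 0) (ha : a ≤ a') (hb : b ≤ b') (N : ℤ) :
    mulCoeff D f g a b N = mulCoeff D f g a' b' N := by
  have hrow : ∀ i, mulRow D i (f i) g b N = mulRow D i (f i) g b' N := fun i =>
    sum_subset (Icc_subset_Icc le_rfl hb) fun j hj hj' => by
      simp only [mem_Icc] at hj hj'
      rw [hg j (by omega), iterate_map_zero, mul_zero, smul_zero]
  rw [mulCoeff, mulCoeff, sum_congr rfl fun i _ => hrow i]
  refine sum_subset (Icc_subset_Icc (by omega) ha) fun i hi hi' => ?_
  simp only [mem_Icc] at hi hi'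
  by_cases hia : a < i
  · rw [hf i hia, mulRow_coeff_zero]
  · refine sum_eq_zero fun j hj => ?_
    simp only [mem_Icc] at hj
    rw [hg j (by omega), iterate_map_zero, mul_zero, smul_zero]

theorem mulRow_one_eq (c : A) {g : ℤ → A} {b : ℤ} (hg : ∀ j > b, g j = 0) (N : ℤ) :
    mulRow D 1 c g b N = c * (g (N - 1) + D (g N)) := by
  rcases lt_or_ge b N with hbN | hNb
  · rw [hg N hbN, D.map_zero, add_zero]
    rcases eq_or_lt_of_le (Int.add_one_le_of_lt hbN) with rfl | hlt
    · rw [mulRow, add_sub_cancel_right, Icc_self, sum_singleton,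
        show (1 + b - (b + 1)).toNat = 0 by omega]
      simp
    · rw [mulRow, Icc_eq_empty (by omega), sum_empty, hg (N - 1) (by omega), mul_zero]
  · rw [mulRow, ← insert_Icc_add_one_left_eq_Icc (by omega : N - 1 ≤ b), sum_insert (by simp),
      sub_add_cancel, ← insert_Icc_add_one_left_eq_Icc hNb, sum_insert (by simp),
      sum_eq_zero fun j hj => ?_]
    · simp [mul_add]
    · rw [mem_Icc] at hj
      rw [Ring.choose_one_of_two_le (by omega), zero_smul]

theorem mulRow_ite (c : A) {i m N : ℤ} (h : N - m ≤ i) :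
    mulRow D i c (fun j => if j = m then 1 else 0) m N = if i = N - m then c else 0 := by
  rw [mulRow, sum_eq_single_of_mem m (by simp; omega), if_pos rfl]
  · split_ifs with hi
    · simp [show (i + m - N).toNat = 0 by omega]
    · rw [show (i + m - N).toNat = (i + m - N).toNat - 1 + 1 by omega,
        Function.iterate_succ_apply, D.map_one_eq_zero, iterate_map_zero, mul_zero, smul_zero]
  · intro j _ hjm
    rw [if_neg hjm, iterate_map_zero, mul_zero, smul_zero]

theorem mulCoeff_ite_right {f : ℤ → A} {a : ℤ} (hf : ∀ i > a, f i = 0) (m N : ℤ) :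
    mulCoeff D f (fun j => if j = m then 1 else 0) a m N = f (N - m) := by
  rw [mulCoeff, sum_congr rfl fun i hi => mulRow_ite D (f i) (mem_Icc.1 hi).1, sum_ite_eq']
  split_ifs with hmem
  · rfl
  · rw [hf (N - m) (by simp at hmem; omega)]

theorem mulCoeff_mulCoeff_right (f g h : ℤ → A) (a b c N : ℤ) :
    mulCoeff D f (mulCoeff D g h b c) a (b + c) N = mulCoeff₃ D f g h a b c N := by
  have expand : mulCoeff₃ D f g h a b c N =
      ∑ i ∈ Icc (N - b - c) a, ∑ j ∈ Icc (N - c - i) b, ∑ w ∈ Icc (N - i - j) c,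
        ∑ s ∈ range ((i + j + w - N).toNat + 1), ∑ p ∈ range ((i + j + w - N).toNat - s + 1),
          (Ring.choose i ((i + j + w - N).toNat - s) *
            (Ring.choose j s * (((i + j + w - N).toNat - s).choose p : ℤ))) •
            (f i * (D^[p] (g j) * D^[(i + j + w - N).toNat - p] (h w))) := by
    refine sum_congr rfl fun i _ => sum_congr rfl fun j _ => sum_congr rfl fun w _ => ?_
    rw [Int.sum_sum_choose_smul_eq]
    simp only [mul_assoc]
  rw [expand]
  simp only [mulCoeff, mulRow, iterate_map_sum, iterate_map_zsmul, D.iterate_leibniz,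
    ← Nat.cast_smul_eq_nsmul ℤ, ← Function.iterate_add_apply, mul_sum, smul_sum, mul_smul_comm,
    smul_smul, sum_sigma']
  refine sum_nbij'
    (fun p => ⟨p.1, p.2.2.1.1, p.2.2.1.2, (p.2.2.1.1 + p.2.2.1.2 - p.2.1).toNat, p.2.2.2⟩)
    (fun p => ⟨p.1, p.2.1 + p.2.2.1 - (p.2.2.2.1 : ℤ), ⟨p.2.1, p.2.2.1⟩, p.2.2.2.2⟩) ?_ ?_ ?_ ?_ ?_
  · rintro ⟨i, y, ⟨j, w⟩, p⟩ hp
    simp only [mem_sigma, mem_Icc, mem_range] at hp ⊢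
    omega
  · rintro ⟨i, j, w, s, p⟩ hp
    simp only [mem_sigma, mem_Icc, mem_range] at hp ⊢
    omega
  · rintro ⟨i, y, ⟨j, w⟩, p⟩ hp
    simp only [mem_sigma, mem_Icc] at hp
    simp only [show j + w - ((j + w - y).toNat : ℤ) = y by omega]
  · rintro ⟨i, j, w, s, p⟩ hp
    simp only [mem_sigma, mem_Icc, mem_range] at hp
    simp only [show (j + w - (j + w - (s : ℤ))).toNat = s by omega]
  · rintro ⟨i, y, ⟨j, w⟩, p⟩ hp
    simp only [mem_sigma, mem_Icc, mem_range] at hp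
    rw [show (i + y - N).toNat - p + (j + w - y).toNat = (i + j + w - N).toNat - p by omega,
      show (i + y - N).toNat = (i + j + w - N).toNat - (j + w - y).toNat by omega]

theorem pdoMul_coeff {P Q : PDO A} {a b : ℤ} (hP : pdoOrderLE P a) (hQ : pdoOrderLE Q b) (N : ℤ) :
    (pdoMul D P Q).1 N = mulCoeff D P.1 Q.1 a b N := by
  rw [pdoMul_coeff_eq_mulCoeff,
    mulCoeff_eq_of_le D P.2.choose_spec Q.2.choose_spec (le_max_left _ a) (le_max_left _ b),
    mulCoeff_eq_of_le D hP hQ (le_max_right _ a) (le_max_right _ b)]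

theorem pdoOrderLE_pdoMul {P Q : PDO A} {a b : ℤ} (hP : pdoOrderLE P a) (hQ : pdoOrderLE Q b) :
    pdoOrderLE (pdoMul D P Q) (a + b) := fun N hN => by
  rw [pdoMul_coeff D hP hQ, mulCoeff_eq_zero_of_lt _ _ _ hN]

theorem pdoMul_assoc (P Q R : PDO A) :
    pdoMul D (pdoMul D P Q) R = pdoMul D P (pdoMul D Q R) := by
  have hP : pdoOrderLE P _ := P.2.choose_spec
  have hQ : pdoOrderLE Q _ := Q.2.choose_spec
  have hR : pdoOrderLE R _ := R.2.choose_spec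
  refine Subtype.ext (funext fun N => ?_)
  rw [pdoMul_coeff D (pdoOrderLE_pdoMul D hP hQ) hR, pdoMul_coeff D hP (pdoOrderLE_pdoMul D hQ hR),
    funext (pdoMul_coeff D hP hQ), funext (pdoMul_coeff D hQ hR), mulCoeff_mulCoeff_left,
    mulCoeff_mulCoeff_right]

theorem pdoOne_coeff (N : ℤ) : (pdoOne A).1 N = if N = 0 then 1 else 0 := rfl

theorem pdoOrderLE_pdoOne : pdoOrderLE (pdoOne A) 0 := fun _ hi => if_neg hi.ne'

theorem pdoMul_pdoOne (P : PDO A) : pdoMul D P (pdoOne A) = P :=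
  Subtype.ext (funext fun N => by
    rw [pdoMul_coeff D P.2.choose_spec pdoOrderLE_pdoOne]
    exact (mulCoeff_ite_right D P.2.choose_spec 0 N).trans (congrArg P.1 (sub_zero N)))

theorem pdoOne_pdoMul (P : PDO A) : pdoMul D (pdoOne A) P = P :=
  Subtype.ext (funext fun N => by
    rw [pdoMul_coeff D pdoOrderLE_pdoOne P.2.choose_spec, mulCoeff_eq_mulRow_add,
      mulRow_zero_eq D _ P.2.choose_spec, pdoOne_coeff, if_pos rfl, one_mul,
      mulCoeff, sum_eq_zero fun i hi => ?_, add_zero]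
    rw [mem_Icc] at hi
    rw [pdoOne_coeff, if_neg (by omega), mulRow_coeff_zero])

theorem pdoMul_pdoDel_coeff (P : PDO A) (N : ℤ) : (pdoMul D P (pdoDel A)).1 N = P.1 (N - 1) := by
  rw [pdoMul_coeff D P.2.choose_spec (b := 1) fun _ hi => if_neg hi.ne']
  exact mulCoeff_ite_right D P.2.choose_spec 1 N

theorem exists_pdoMul_eq_pdoOne {S : PDO A} (hS : pdoInOnePlus S) :
    ∃ T, pdoInOnePlus T ∧ pdoMul D S T = pdoOne A := by
  -- The `∂^N`-coefficient of `S T` is `T_N` plus the rows `i ≤ -1` of `S`, which see `T` only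
  -- above `N`.
  obtain ⟨T, hT, hrec⟩ := exists_pdoInOnePlus_rec (fun N g => -mulCoeff D S.1 g (-1) 0 N)
    fun N g g' h => by rw [mulCoeff_congr_right D S.1 fun j hj => h j (by omega)]
  refine ⟨T, hT, Subtype.ext (funext fun N => ?_)⟩
  rw [pdoMul_coeff D hS.2 hT.2, mulCoeff_eq_mulRow_add, mulRow_zero_eq D _ hT.2, hS.1, one_mul,
    zero_sub]
  rcases lt_or_ge N 0 with hN | hN
  · rw [hrec N hN, neg_add_cancel, pdoOne_coeff, if_neg hN.ne]
  · rw [mulCoeff_eq_zero_of_lt _ _ _ (by omega : -1 + 0 < N), add_zero]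
    rcases eq_or_lt_of_le hN with rfl | hpos
    · rw [hT.1, pdoOne_coeff, if_pos rfl]
    · rw [hT.2 N hpos, pdoOne_coeff, if_neg hpos.ne']

theorem exists_pdoMul_inverse {S : PDO A} (hS : pdoInOnePlus S) :
    ∃ T, pdoInOnePlus T ∧ pdoMul D S T = pdoOne A ∧ pdoMul D T S = pdoOne A := by
  obtain ⟨T, hT, hST⟩ := exists_pdoMul_eq_pdoOne D hS
  obtain ⟨V, -, hTV⟩ := exists_pdoMul_eq_pdoOne D hT
  have hVS : V = S :=
    calc V = pdoMul D (pdoMul D S T) V := by rw [hST, pdoOne_pdoMul]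
      _ = S := by rw [pdoMul_assoc, hTV, pdoMul_pdoOne]
  exact ⟨T, hT, hST, hVS ▸ hTV⟩

theorem exists_pdoMul_pdoDel_eq (hsurj : Function.Surjective D) {Q : PDO A}
    (hQ : pdoInDelPlus Q) : ∃ S, pdoInOnePlus S ∧ pdoMul D S (pdoDel A) = pdoMul D Q S := by
  choose antideriv hantideriv using hsurj
  obtain ⟨S, hS, hrec⟩ := exists_pdoInOnePlus_rec
    (fun N g => antideriv (-mulCoeff D Q.1 g (-1) 0 N))
    fun N g g' h => by rw [mulCoeff_congr_right D Q.1 fun j hj => h j (by omega)]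
  have hDS : ∀ N, D (S.1 N) + mulCoeff D Q.1 S.1 (-1) 0 N = 0 := by
    intro N
    rcases lt_or_ge N 0 with hN | hN
    · rw [hrec N hN, hantideriv, neg_add_cancel]
    · rw [mulCoeff_eq_zero_of_lt _ _ _ (by omega : -1 + 0 < N), add_zero]
      rcases eq_or_lt_of_le hN with rfl | hpos
      · rw [hS.1, D.map_one_eq_zero]
      · rw [hS.2 N hpos, D.map_zero]
  refine ⟨S, hS, Subtype.ext (funext fun N => ?_)⟩
  rw [pdoMul_pdoDel_coeff, pdoMul_coeff D hQ.2.2 hS.2, mulCoeff_eq_mulRow_add,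
    mulRow_one_eq D _ hS.2, sub_self, mulCoeff_eq_mulRow_add, mulRow_zero_eq D _ hS.2, hQ.1, hQ.2.1, zero_sub]
  linear_combination -(hDS N)

end LeibnizProduct

theorem pdo_conjugation_transitive_general
    {A : Type} [CommRing A] (d : A → A)
    (hadd : ∀ a b : A, d (a + b) = d a + d b)
    (hleib : ∀ a b : A, d (a * b) = a * d b + d a * b)
    (hsurj : Function.Surjective d)
    (Q : PDO A) (hQ : pdoInDelPlus Q) :
    ∃ S Sinv : PDO A, pdoInOnePlus S ∧ pdoInOnePlus Sinv ∧
      pdoMul d S Sinv = pdoOne A ∧ pdoMul d Sinv S = pdoOne A ∧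
      pdoMul d (pdoMul d S (pdoDel A)) Sinv = Q := by
  obtain ⟨D, rfl⟩ : ∃ D : Derivation ℤ A A, ⇑D = d :=
    ⟨Derivation.mk' (AddMonoidHom.mk' d hadd).toIntLinearMap fun a b => by
      simp [hleib, mul_comm], rfl⟩
  obtain ⟨S, hS, hSQ⟩ := exists_pdoMul_pdoDel_eq D hsurj hQ
  obtain ⟨T, hT, hST, hTS⟩ := exists_pdoMul_inverse D hS
  refine ⟨S, T, hS, hT, hST, hTS, ?_⟩
  rw [hSQ, pdoMul_assoc, hST, pdoMul_pdoOne]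

/-- the group `1 + P(-1)` acts transitively on `∂ + P(-1)` by conjugation:
for any `Q ∈ ∂ + P(-1)` there is `S ∈ 1 + P(-1)`, invertible in `1 + P(-1)`, with
`S ∂ S⁻¹ = Q`. Hypotheses: the constants `ker ∂` form a field and `∂` is surjective
(enough antiderivatives). -/
theorem pdo_conjugation_transitive {K : Type} [Field K] [CharZero K]
    {A : Type} [CommRing A] [Algebra K A] (d : A → A)
    (hadd : ∀ a b : A, d (a + b) = d a + d b)
    (hleib : ∀ a b : A, d (a * b) = a * d b + d a * b)
    (hfield : ∀ a : A, d a = 0 → a ≠ 0 → ∃ b : A, d b = 0 ∧ a * b = 1)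
    (hsurj : Function.Surjective d)
    (Q : PDO A) (hQ : pdoInDelPlus Q) :
    ∃ S Sinv : PDO A, pdoInOnePlus S ∧ pdoInOnePlus Sinv ∧
      pdoMul d S Sinv = pdoOne A ∧ pdoMul d Sinv S = pdoOne A ∧
      pdoMul d (pdoMul d S (pdoDel A)) Sinv = Q :=
  pdo_conjugation_transitive_general d hadd hleib hsurj Q hQ
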